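/- Let X ∈ ℝ^d be square integrable with positive definite covariance Σ, Y real with E[Y|X] = ψ₀(α₀ᵀX), ‖α₀‖ = 1, and suppose E[X − EX | α₀ᵀX] = (α₀ᵀ(X−EX)) (α₀ᵀΣα₀)^{-1} Σα₀. Then Cov(X, Y) = c Σ α₀, where c = Cov(ψ₀(α₀ᵀX), α₀ᵀX) / (α₀ᵀΣα₀). Consequently the population linear least squares coefficient vector ᾱ = Σ^{-1} Cov(X,Y) satisfies ᾱ = c α₀. -/

import Mathlib

/-!
Conditioning on `X` replaces `Y` by `ψ₀(α₀ᵀX)` in `Cov(Xᵢ, Y)`, since `Xᵢ` is `X`-measurable.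
Conditioning that in turn on `α₀ᵀX` replaces `Xᵢ - EXᵢ` by its linear conditional expectation,
so `Cov(Xᵢ, Y) = Cov(ψ₀(α₀ᵀX), α₀ᵀX) (Σα₀)ᵢ / (α₀ᵀΣα₀)`; inverting `Σ` gives the second claim.
-/

open Matrix MeasureTheory ProbabilityTheory

section

variable {Ω : Type*} {mΩ : MeasurableSpace Ω} {μ : Measure Ω}

lemma memLp_const_dotProduct {ι : Type*} [Fintype ι] {X : Ω → ι → ℝ} {p : ENNReal}
    (hX : ∀ i, MemLp (fun ω => X ω i) p μ) (α : ι → ℝ) :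
    MemLp (fun ω => α ⬝ᵥ X ω) p μ := by
  simpa only [dotProduct] using memLp_finsetSum Finset.univ fun i _ => (hX i).const_mul (α i)

lemma covariance_eq_of_condExp_ae_eq [IsProbabilityMeasure μ] {m : MeasurableSpace Ω}
    (hm : m ≤ mΩ) {Z Y ψ : Ω → ℝ} (hZm : StronglyMeasurable[m] Z) (hZ : MemLp Z 2 μ)
    (hY : MemLp Y 2 μ) (hψ : MemLp ψ 2 μ) (hYψ : μ[Y|m] =ᵐ[μ] ψ) :
    cov[Z, Y; μ] = cov[Z, ψ; μ] := by
  have hmean : μ[Y] = μ[ψ] := (integral_condExp hm).symm.trans (integral_congr_ae hYψ)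
  have hprod : μ[Z * Y] = μ[Z * ψ] :=
    calc μ[Z * Y] = ∫ ω, μ[Z * Y|m] ω ∂μ := (integral_condExp hm).symm
      _ = ∫ ω, (Z * μ[Y|m]) ω ∂μ := integral_congr_ae <|
        condExp_mul_of_stronglyMeasurable_left hZm (hZ.integrable_mul hY)
          (hY.integrable one_le_two)
      _ = μ[Z * ψ] := integral_congr_ae <| (ae_eq_refl Z).mul hYψ
  rw [covariance_eq_sub hZ hY, covariance_eq_sub hZ hψ, hprod, hmean]

end

theorem stmt8_general {Ω : Type*} [m0 : MeasurableSpace Ω] {μ : Measure Ω} [IsProbabilityMeasure μ]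
    {d : ℕ} (X : Ω → Fin d → ℝ) (hX : Measurable X)
    (hX2 : ∀ i, MemLp (fun ω => X ω i) 2 μ)
    (Y : Ω → ℝ) (hY : MemLp Y 2 μ)
    (EX : Fin d → ℝ) (hEX : ∀ i, ∫ ω, X ω i ∂μ = EX i)
    (Sig : Matrix (Fin d) (Fin d) ℝ) (hSig : Sig.PosDef)
    (α₀ : Fin d → ℝ)
    (ψ₀ : ℝ → ℝ) (hψ₀ : Measurable ψ₀)
    (hψ₀int : MemLp (fun ω => ψ₀ (α₀ ⬝ᵥ X ω)) 2 μ)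
    (hcondY : μ[Y | MeasurableSpace.comap X inferInstance]
      =ᵐ[μ] fun ω => ψ₀ (α₀ ⬝ᵥ X ω))
    (hlin : ∀ i, (μ[fun ω => X ω i - EX i |
        MeasurableSpace.comap (fun ω => α₀ ⬝ᵥ X ω) inferInstance]) =ᵐ[μ]
      fun ω => (α₀ ⬝ᵥ fun j => X ω j - EX j) *
        ((α₀ ⬝ᵥ Sig.mulVec α₀)⁻¹ * Sig.mulVec α₀ i)) :
    let cov : Fin d → ℝ := fun i => ∫ ω, (X ω i - EX i) * (Y ω - ∫ ω', Y ω' ∂μ) ∂μ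
    let c : ℝ := (∫ ω, (ψ₀ (α₀ ⬝ᵥ X ω) - ∫ ω', ψ₀ (α₀ ⬝ᵥ X ω') ∂μ) *
        ((α₀ ⬝ᵥ X ω) - ∫ ω', α₀ ⬝ᵥ X ω' ∂μ) ∂μ) / (α₀ ⬝ᵥ Sig.mulVec α₀)
    cov = c • Sig.mulVec α₀ ∧ Sig⁻¹.mulVec cov = c • α₀ := by
  intro cov c
  set T : Ω → ℝ := fun ω => α₀ ⬝ᵥ X ω
  set ψ : Ω → ℝ := fun ω => ψ₀ (T ω)
  set k : Fin d → ℝ := fun i => (α₀ ⬝ᵥ Sig *ᵥ α₀)⁻¹ * (Sig *ᵥ α₀) i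
  have hT : Measurable T := (continuous_const.dotProduct continuous_id).measurable.comp hX
  have hT2 : MemLp T 2 μ := memLp_const_dotProduct hX2 α₀
  have hXi_meas : ∀ i, StronglyMeasurable[.comap X inferInstance] fun ω => X ω i :=
    fun i => ((measurable_pi_apply i).comp (comap_measurable X)).stronglyMeasurable
  have hcov_apply : ∀ i, cov i = cov[ψ, T; μ] * k i := by
    intro i
    have hlin' : μ[fun ω => X ω i - EX i | .comap T inferInstance] =ᵐ[μ]
        fun ω => (T ω - α₀ ⬝ᵥ EX) * k i :=
      (hlin i).trans (.of_eq (funext fun ω => by simp only [T, k, ← dotProduct_sub]; rfl))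
    calc cov i = cov[fun ω => X ω i, Y; μ] := by simp only [cov, covariance, hEX]
      _ = cov[fun ω => X ω i, ψ; μ] :=
        covariance_eq_of_condExp_ae_eq hX.comap_le (hXi_meas i) (hX2 i) hY hψ₀int hcondY
      _ = cov[ψ, fun ω => X ω i - EX i; μ] := by
        rw [covariance_comm, covariance_sub_const_right ((hX2 i).integrable one_le_two)]
      _ = cov[ψ, fun ω => (T ω - α₀ ⬝ᵥ EX) * k i; μ] :=
        covariance_eq_of_condExp_ae_eq hT.comap_le
          (hψ₀.comp (comap_measurable T)).stronglyMeasurable hψ₀int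
          ((hX2 i).sub (memLp_const _)) ((hT2.sub (memLp_const _)).mul_const _) hlin'
      _ = cov[ψ, T; μ] * k i := by
        rw [covariance_mul_const_right, covariance_sub_const_right (hT2.integrable one_le_two)]
  have hcov : cov = c • Sig *ᵥ α₀ := funext fun i => by
    rw [hcov_apply, Pi.smul_apply, smul_eq_mul]
    simp only [c, k, div_eq_mul_inv, covariance]
    ring
  refine ⟨hcov, ?_⟩
  rw [hcov, mulVec_smul, mulVec_mulVec, nonsing_inv_mul _ (isUnit_iff_ne_zero.2 hSig.det_pos.ne'),
    one_mulVec]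

/-- Under the linear-conditional-expectation property (implied by elliptic symmetry),
`Cov(X, Y) = c Σ α₀` with `c = Cov(ψ₀(α₀ᵀX), α₀ᵀX)/(α₀ᵀΣα₀)`, and consequently the
population linear least squares coefficient `ᾱ = Σ⁻¹Cov(X,Y)` satisfies `ᾱ = c α₀`. -/
theorem stmt8 {Ω : Type*} [m0 : MeasurableSpace Ω] {μ : Measure Ω} [IsProbabilityMeasure μ]
    {d : ℕ} (X : Ω → Fin d → ℝ) (hX : Measurable X)
    (hX2 : ∀ i, MemLp (fun ω => X ω i) 2 μ)
    (Y : Ω → ℝ) (hY : MemLp Y 2 μ)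
    (EX : Fin d → ℝ) (hEX : ∀ i, ∫ ω, X ω i ∂μ = EX i)
    (Sig : Matrix (Fin d) (Fin d) ℝ) (hSig : Sig.PosDef)
    (hcovX : ∀ i j, ∫ ω, (X ω i - EX i) * (X ω j - EX j) ∂μ = Sig i j)
    (α₀ : Fin d → ℝ) (hα₀ : α₀ ⬝ᵥ α₀ = 1)
    (ψ₀ : ℝ → ℝ) (hψ₀ : Measurable ψ₀)
    (hψ₀int : MemLp (fun ω => ψ₀ (α₀ ⬝ᵥ X ω)) 2 μ)
    (hcondY : μ[Y | MeasurableSpace.comap X inferInstance]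
      =ᵐ[μ] fun ω => ψ₀ (α₀ ⬝ᵥ X ω))
    (hlin : ∀ i, (μ[fun ω => X ω i - EX i |
        MeasurableSpace.comap (fun ω => α₀ ⬝ᵥ X ω) inferInstance]) =ᵐ[μ]
      fun ω => (α₀ ⬝ᵥ fun j => X ω j - EX j) *
        ((α₀ ⬝ᵥ Sig.mulVec α₀)⁻¹ * Sig.mulVec α₀ i)) :
    let cov : Fin d → ℝ := fun i => ∫ ω, (X ω i - EX i) * (Y ω - ∫ ω', Y ω' ∂μ) ∂μ
    let c : ℝ := (∫ ω, (ψ₀ (α₀ ⬝ᵥ X ω) - ∫ ω', ψ₀ (α₀ ⬝ᵥ X ω') ∂μ) *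
        ((α₀ ⬝ᵥ X ω) - ∫ ω', α₀ ⬝ᵥ X ω' ∂μ) ∂μ) / (α₀ ⬝ᵥ Sig.mulVec α₀)
    cov = c • Sig.mulVec α₀ ∧ Sig⁻¹.mulVec cov = c • α₀ :=
  stmt8_general (m0 := m0) X hX hX2 Y hY EX hEX Sig hSig α₀ ψ₀ hψ₀ hψ₀int hcondY hlin
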